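/- arXiv:1910.07726 — 6 statements merged into one kernel-verified Lean document; each statement's English description precedes it below -/
import Mathlib

section
/- Let λ₁ < λ₂ < 0 be reals, and define y(t) = α₁e^{λ₁t} + α₂e^{λ₂t} where α₁ = (λ₂x₀₁ − x₀₂)/(λ₂−λ₁), α₂ = (−λ₁x₀₁ + x₀₂)/(λ₂−λ₁). If α₁α₂ + α₂² > 0 (equivalently, (x₀₁x₀₂ − λ₁x₀₁²)/(λ₂−λ₁) > 0), then y(t) does not change sign for t ≥ 0: y(t) has the same (strict) sign as α₂ for all t ≥ 0. -/
theorem mul_mul_add_mul_pos_of_le {a b u v : ℝ} (h : 0 < a * b + b ^ 2) (hu : 0 < u)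
    (huv : u ≤ v) : 0 < b * (a * u + b * v) := by
  have split : b * (a * u + b * v) = (a * b + b ^ 2) * u + b ^ 2 * (v - u) := by ring
  rw [split]
  exact add_pos_of_pos_of_nonneg (mul_pos h hu) (mul_nonneg (sq_nonneg b) (sub_nonneg.2 huv))

theorem stmt_7_general (lam1 lam2 : ℝ) (h12 : lam1 < lam2)
    (x01 x02 : ℝ) :
    let α1 : ℝ := (lam2 * x01 - x02) / (lam2 - lam1)
    let α2 : ℝ := (-lam1 * x01 + x02) / (lam2 - lam1)
    α1 * α2 + α2 ^ 2 > 0 →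
      ∀ t : ℝ, 0 ≤ t →
        0 < α2 * (α1 * Real.exp (lam1 * t) + α2 * Real.exp (lam2 * t)) := by
  intro α1 α2 h t ht
  exact mul_mul_add_mul_pos_of_le h (Real.exp_pos _)
    (Real.exp_le_exp.2 (mul_le_mul_of_nonneg_right h12.le ht))

theorem stmt_7 (lam1 lam2 : ℝ) (h12 : lam1 < lam2) (h2 : lam2 < 0)
    (x01 x02 : ℝ) :
    let α1 : ℝ := (lam2 * x01 - x02) / (lam2 - lam1)
    let α2 : ℝ := (-lam1 * x01 + x02) / (lam2 - lam1)
    α1 * α2 + α2 ^ 2 > 0 →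
      ∀ t : ℝ, 0 ≤ t →
        0 < α2 * (α1 * Real.exp (lam1 * t) + α2 * Real.exp (lam2 * t)) :=
  stmt_7_general lam1 lam2 h12 x01 x02
end

section
/- Let A be the n×n upper shift matrix, B = eₙ, and distinct reals λ₁,...,λₙ with Vandermonde matrix V and F = WV⁻¹ where W = [λ₁ⁿ ... λₙⁿ]. Then the characteristic polynomial of A + BF equals ∏_{i=1}^n (X − λᵢ); in particular if all λᵢ < 0 then A + BF is Hurwitz (all eigenvalues have negative real part). -/
/-!
The columns `vᵢ = (1, λᵢ, …, λᵢⁿ)` of the Vandermonde matrix `V` are eigenvectors of `A + BF`: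
the shift sends `vᵢ` to `(λᵢ, …, λᵢⁿ, 0)`, and `BF` fills the missing last entry because
`FV = W`. Hence `(A + BF) V = V · diag λ`, and since `V` is invertible for distinct `λᵢ`,
`A + BF` has the characteristic polynomial of `diag λ`, whose roots are the `λᵢ`.
-/

open Polynomial Matrix

variable {R : Type*} [CommRing R]

theorem Matrix.charpoly_eq_of_mul_eq_mul {ι : Type*} [Fintype ι] [DecidableEq ι]
    {M D P : Matrix ι ι R} (hP : IsUnit P.det) (h : M * P = P * D) :
    M.charpoly = D.charpoly := by
  rw [← mul_nonsing_inv_cancel_right (A := P) M hP, h, charpoly_mul_comm,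
    nonsing_inv_mul_cancel_left (A := P) D hP]

theorem Polynomial.mem_roots_prod_X_sub_C [IsDomain R] {ι : Type*} [Fintype ι] {f : ι → R}
    {μ : R} : μ ∈ (∏ i, (X - C (f i))).roots ↔ ∃ i, f i = μ := by
  rw [mem_roots (Finset.prod_ne_zero_iff.mpr fun i _ => X_sub_C_ne_zero (f i)), IsRoot,
    eval_prod, Finset.prod_eq_zero_iff]
  simp [sub_eq_zero, eq_comm]

theorem shift_mul_vandermonde_transpose_add {n : ℕ} (lam : Fin (n + 1) → R) :
    (of fun i j => if (i : ℕ) + 1 = j then 1 else 0 : Matrix (Fin (n + 1)) (Fin (n + 1)) R)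
        * (vandermonde lam)ᵀ
      + (of fun i _ => if i = Fin.last n then 1 else 0 : Matrix (Fin (n + 1)) (Fin 1) R)
        * (of fun _ j => lam j ^ (n + 1) : Matrix (Fin 1) (Fin (n + 1)) R)
      = (vandermonde lam)ᵀ * diagonal lam := by
  ext i k
  rw [Matrix.add_apply, mul_diagonal]
  simp only [mul_apply, of_apply, transpose_apply, vandermonde_apply, ite_mul, one_mul, zero_mul,
    Finset.univ_unique, Finset.sum_singleton]
  induction i using Fin.lastCases with
  | last =>
    have (j : Fin (n + 1)) : n + 1 ≠ (j : ℕ) := by omega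
    simp [this, pow_succ]
  | cast i =>
    have (j : Fin (n + 1)) : (i : ℕ) + 1 = j ↔ j = i.succ := by rw [Fin.ext_iff]; simp; omega
    simp [this, pow_succ]

theorem stmt_11 (n : ℕ) (lam : Fin (n + 1) → ℝ) (hinj : Function.Injective lam) :
    let A : Matrix (Fin (n + 1)) (Fin (n + 1)) ℝ :=
      Matrix.of fun i j => if (i : ℕ) + 1 = (j : ℕ) then 1 else 0
    let B : Matrix (Fin (n + 1)) (Fin 1) ℝ :=
      Matrix.of fun i _ => if i = Fin.last n then 1 else 0
    let V : Matrix (Fin (n + 1)) (Fin (n + 1)) ℝ :=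
      Matrix.of fun i j => lam j ^ (i : ℕ)
    let W : Matrix (Fin 1) (Fin (n + 1)) ℝ :=
      Matrix.of fun _ j => lam j ^ (n + 1)
    let F : Matrix (Fin 1) (Fin (n + 1)) ℝ := W * V⁻¹
    (A + B * F).charpoly = ∏ i, (Polynomial.X - Polynomial.C (lam i)) ∧
      ((∀ i, lam i < 0) → ∀ μ : ℂ,
        μ ∈ ((A + B * F).charpoly.map (algebraMap ℝ ℂ)).roots → μ.re < 0) := by
  intro A B V W F
  have hV : IsUnit V.det := by
    rw [show V = (vandermonde lam)ᵀ from rfl, det_transpose, isUnit_iff_ne_zero,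
      det_vandermonde_ne_zero_iff]
    exact hinj
  have hsim : (A + B * F) * V = V * diagonal lam := by
    rw [add_mul, Matrix.mul_assoc, nonsing_inv_mul_cancel_right (A := V) W hV]
    exact shift_mul_vandermonde_transpose_add lam
  have hcp : (A + B * F).charpoly = ∏ i, (X - C (lam i)) :=
    (charpoly_eq_of_mul_eq_mul hV hsim).trans (charpoly_diagonal lam)
  refine ⟨hcp, fun hneg μ hμ => ?_⟩
  rw [hcp, Polynomial.map_prod] at hμ
  simp only [Polynomial.map_sub, map_X, map_C] at hμ
  obtain ⟨i, rfl⟩ := mem_roots_prod_X_sub_C.mp hμ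
  simpa using hneg i
end

section
/- Let λ₁ < ... < λₙ < 0 and α₁, ..., αₙ ∈ ℝ with αₙ ≠ 0, and suppose |αₙ| > Σ_{k : αₖαₙ < 0} |αₖ|. Then y(t) = Σᵢ αᵢ e^{λᵢ t} tends to 0 as t → ∞ and never vanishes on [0, ∞); hence y converges to 0 monotonically in sign (without sign change). -/
/-!
Each exponential decays, so `y → 0`. For nonvanishing, multiply `y(t)` by the leading
coefficient `αₙ`: for `t ≥ 0` every weight `e^{λᵢ t}` is at most `e^{λₙ t}`, so the terms
of sign opposite to `αₙ` contribute at least `-|αₙ| e^{λₙ t} Σ_{αₖαₙ<0} |αₖ|`, while the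
remaining terms contribute at least `αₙ² e^{λₙ t}`. Dominance makes `αₙ y(t) > 0`.
-/

open Finset Filter

theorem tendsto_sum_mul_exp_mul_atTop_zero {ι : Type*} [Fintype ι] (α lam : ι → ℝ)
    (hlam : ∀ i, lam i < 0) :
    Tendsto (fun t : ℝ => ∑ i, α i * Real.exp (lam i * t)) atTop (nhds 0) := by
  have hterm : ∀ i, Tendsto (fun t : ℝ => α i * Real.exp (lam i * t)) atTop (nhds 0) := by
    intro i
    have hexp : Tendsto (fun t : ℝ => Real.exp (lam i * t)) atTop (nhds 0) :=
      Real.tendsto_exp_comp_nhds_zero.mpr ((tendsto_const_mul_atBot_of_neg (hlam i)).mpr tendsto_id)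
    simpa using hexp.const_mul (α i)
  simpa using tendsto_finsetSum univ fun i _ => hterm i

theorem mul_sum_mul_pos_of_dominant {ι : Type*} [Fintype ι] (α w : ι → ℝ) (j : ι)
    (hw : ∀ i, 0 ≤ w i) (hwj : ∀ i, w i ≤ w j) (hwj_pos : 0 < w j)
    (hdom : ∑ k ∈ univ.filter (fun k => α k * α j < 0), |α k| < |α j|) :
    0 < α j * ∑ i, α i * w i := by
  set opp := univ.filter (fun k => α k * α j < 0)
  have hopp : -(|α j| * w j * ∑ k ∈ opp, |α k|) ≤ ∑ k ∈ opp, α j * (α k * w k) := by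
    rw [mul_sum, ← sum_neg_distrib]
    refine sum_le_sum fun k _ => neg_le_of_abs_le ?_
    rw [abs_mul, abs_mul, abs_of_nonneg (hw k)]
    have := mul_le_mul_of_nonneg_left (hwj k) (abs_nonneg (α k))
    nlinarith [abs_nonneg (α j)]
  have hsame : α j * (α j * w j) ≤ ∑ k ∈ univ.filter (fun k => ¬ α k * α j < 0),
      α j * (α k * w k) := by
    refine single_le_sum (f := fun k => α j * (α k * w k)) (fun k hk => ?_) ?_
    · have : 0 ≤ α k * α j := not_lt.mp (mem_filter.mp hk).2
      nlinarith [hw k]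
    · simpa using mul_self_nonneg (α j)
  have hsq : α j * (α j * w j) = |α j| * w j * |α j| := by
    rw [← mul_assoc, ← abs_mul_abs_self]; ring
  have hαj : 0 < |α j| := (sum_nonneg fun k _ => abs_nonneg (α k)).trans_lt hdom
  rw [mul_sum, ← sum_filter_add_sum_filter_not univ (fun k => α k * α j < 0)]
  nlinarith [mul_pos (mul_pos hαj hwj_pos) (sub_pos.mpr hdom)]

open Finset Filter in
theorem stmt_12_general (n : ℕ) (lam α : Fin (n + 1) → ℝ)
    (hmono : StrictMono lam) (hneg : lam (Fin.last n) < 0)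
    (hdom : (∑ k ∈ univ.filter (fun k : Fin (n + 1) =>
        α k * α (Fin.last n) < 0), |α k|) < |α (Fin.last n)|) :
    Tendsto (fun t : ℝ => ∑ i, α i * Real.exp (lam i * t)) atTop (nhds 0) ∧
      ∀ t : ℝ, 0 ≤ t → (∑ i, α i * Real.exp (lam i * t)) ≠ 0 := by
  have hlam_le : ∀ i, lam i ≤ lam (Fin.last n) := fun i => hmono.monotone (Fin.le_last i)
  refine ⟨tendsto_sum_mul_exp_mul_atTop_zero α lam fun i => (hlam_le i).trans_lt hneg,
    fun t ht => ?_⟩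
  have hpos := mul_sum_mul_pos_of_dominant α (fun i => Real.exp (lam i * t)) (Fin.last n)
    (fun i => (Real.exp_pos _).le)
    (fun i => Real.exp_le_exp.mpr (mul_le_mul_of_nonneg_right (hlam_le i) ht))
    (Real.exp_pos _) hdom
  exact right_ne_zero_of_mul hpos.ne'

open Finset Filter in
theorem stmt_12 (n : ℕ) (lam α : Fin (n + 1) → ℝ)
    (hmono : StrictMono lam) (hneg : lam (Fin.last n) < 0)
    (hαn : α (Fin.last n) ≠ 0)
    (hdom : (∑ k ∈ univ.filter (fun k : Fin (n + 1) =>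
        α k * α (Fin.last n) < 0), |α k|) < |α (Fin.last n)|) :
    Tendsto (fun t : ℝ => ∑ i, α i * Real.exp (lam i * t)) atTop (nhds 0) ∧
      ∀ t : ℝ, 0 ≤ t → (∑ i, α i * Real.exp (lam i * t)) ≠ 0 :=
  stmt_12_general n lam α hmono hneg hdom
end

section
/- Suppose (A, B, C) and exosystem matrices (S, H) are such that there exist Π and Γ solving the regulator (Sylvester) equations ΠS = AΠ + BΓ and 0 = CΠ + H, and F is such that A + BF is Hurwitz. Define G = Γ − FΠ, and consider the closed-loop dynamics ẋ = (A+BF)x + BGw, ẇ = Sw, with tracking error e(t) = Cx(t) + Hw(t). Then for x̃(t) := x(t) − Πw(t), one has x̃̇ = (A+BF)x̃ and e(t) = Cx̃(t); in particular e(t) → 0 as t → ∞ for every initial condition (x₀, w₀). -/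
/-!
In the coordinates `x̃ = x - Πw` the regulator equations cancel the exosystem: `ΠS = AΠ + BΓ`
becomes `ΠS = (A + BF)Π + BG`, so `x̃` obeys `x̃' = (A + BF)x̃`, and `CΠ = -H` turns `e` into
`Cx̃`. A solution of `y' = My` is `exp(tM) y(0)` by uniqueness for Lipschitz ODEs. Over `ℂ`,
`y(0)` is a sum of generalized eigenvectors of `M`, and on such a vector `exp(tM)` acts as
`e^{tμ}` times a polynomial in `t`, which tends to `0` when `Re μ < 0`.
-/

open Filter Topology Matrix NormedSpace Module
open scoped Nat Complex

theorem Complex.tendsto_exp_mul_mul_pow_atTop {μ : ℂ} (hμ : μ.re < 0) (j : ℕ) :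
    Tendsto (fun t : ℝ => cexp (t * μ) * (t : ℂ) ^ j) atTop (𝓝 0) := by
  rw [tendsto_zero_iff_norm_tendsto_zero]
  refine (tendsto_rpow_mul_exp_neg_mul_atTop_nhds_zero j (-μ.re) (neg_pos.2 hμ)).congr' ?_
  filter_upwards [eventually_ge_atTop 0] with t ht
  rw [norm_mul, Complex.norm_exp, norm_pow, Complex.norm_real, Real.norm_of_nonneg ht,
    Complex.re_ofReal_mul, Real.rpow_natCast, neg_neg, mul_comm μ.re, mul_comm]

theorem Matrix.hasDerivAt_sub_mulVec_of_mul_eq_mul_add {𝕜 : Type*} [NontriviallyNormedField 𝕜]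
    [CompleteSpace 𝕜] {ι κ : Type*} [Fintype ι] [Fintype κ] {M : Matrix ι ι 𝕜}
    {K : Matrix ι κ 𝕜} {S : Matrix κ κ 𝕜} {P : Matrix ι κ 𝕜} (hP : P * S = M * P + K)
    {x : 𝕜 → ι → 𝕜} {w : 𝕜 → κ → 𝕜} {t : 𝕜} (hx : HasDerivAt x (M *ᵥ x t + K *ᵥ w t) t)
    (hw : HasDerivAt w (S *ᵥ w t) t) :
    HasDerivAt (fun s => x s - P *ᵥ w s) (M *ᵥ (x t - P *ᵥ w t)) t := by
  have hPw : HasDerivAt (fun s => P *ᵥ w s) (P *ᵥ (S *ᵥ w t)) t :=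
    (mulVecLin P).toContinuousLinearMap.hasFDerivAt.comp_hasDerivAt t hw
  refine (hx.sub hPw).congr_deriv ?_
  rw [mulVec_mulVec, hP, add_mulVec, mulVec_sub, ← mulVec_mulVec]
  abel

variable {ι : Type*} [Fintype ι] [DecidableEq ι]

theorem Matrix.isRoot_charpoly_of_mem_maxGenEigenspace {K : Type*} [Field K] {M : Matrix ι ι K}
    {μ : K} {u : ι → K} (hu : u ∈ End.maxGenEigenspace (toLin' M) μ) (hu0 : u ≠ 0) :
    M.charpoly.IsRoot μ := by
  rw [← charpoly_toLin', ← End.hasEigenvalue_iff_isRoot_charpoly]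
  exact End.HasUnifEigenvalue.lt zero_lt_one fun h => hu0 ((Submodule.mem_bot K).1 (h ▸ hu))

theorem Matrix.exists_pow_sub_smul_one_mulVec_eq_zero {K : Type*} [Field K] {M : Matrix ι ι K}
    {μ : K} {u : ι → K} (hu : u ∈ End.maxGenEigenspace (toLin' M) μ) :
    ∃ k : ℕ, ((M - μ • 1) ^ k) *ᵥ u = 0 := by
  obtain ⟨k, hk⟩ := (End.mem_maxGenEigenspace _ _ _).1 hu
  refine ⟨k, ?_⟩
  have hlin : (toLin' M - μ • 1) ^ k = toLinAlgEquiv' ((M - μ • 1) ^ k) := by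
    simp only [map_pow, map_sub, map_smul, map_one]; rfl
  rwa [hlin, toLinAlgEquiv'_apply] at hk

section LinftyOp

-- `exp` only depends on the topology, so the choice of matrix norm is immaterial.
attribute [local instance] Matrix.linftyOpNormedRing Matrix.linftyOpNormedAlgebra

theorem Matrix.exp_smul_mulVec_eq_sum_of_pow_mulVec_eq_zero {N : Matrix ι ι ℂ} {v : ι → ℂ}
    {k : ℕ} (hv : (N ^ k) *ᵥ v = 0) (t : ℂ) :
    exp (t • N) *ᵥ v = ∑ j ∈ Finset.range k, (t ^ j / j !) • (N ^ j *ᵥ v) := by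
  have hexp := (exp_series_hasSum_exp' (𝕂 := ℂ) (t • N)).map (mulVec.addMonoidHomLeft v)
    (continuous_id.matrix_mulVec continuous_const)
  refine hexp.unique (hasSum_sum_of_ne_finset_zero fun j hj => ?_) |>.trans
    (Finset.sum_congr rfl fun j _ => ?_)
  · obtain ⟨i, rfl⟩ := Nat.exists_eq_add_of_le' (not_lt.1 (Finset.mem_range.not.1 hj))
    simp [mulVec.addMonoidHomLeft, smul_pow, pow_add, smul_mulVec, ← mulVec_mulVec, hv]
  · simp [mulVec.addMonoidHomLeft, smul_pow, smul_mulVec, smul_smul, div_eq_inv_mul]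

theorem Matrix.exp_smul_mulVec_eq_sum_of_genEigenvector {M : Matrix ι ι ℂ} {μ : ℂ}
    {v : ι → ℂ} {k : ℕ} (hv : ((M - μ • 1) ^ k) *ᵥ v = 0) (t : ℂ) :
    exp (t • M) *ᵥ v =
      ∑ j ∈ Finset.range k, (cexp (t * μ) * t ^ j / j !) • ((M - μ • 1) ^ j *ᵥ v) := by
  have hsplit : t • M = algebraMap ℂ _ (t * μ) + t • (M - μ • 1) := by
    rw [Algebra.algebraMap_eq_smul_one, smul_sub, smul_smul]; abel
  have hcomm : Commute (algebraMap ℂ (Matrix ι ι ℂ) (t * μ)) (t • (M - μ • 1)) :=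
    Algebra.commutes _ _
  have hscalar : exp (algebraMap ℂ (Matrix ι ι ℂ) (t * μ)) = algebraMap ℂ _ (cexp (t * μ)) := by
    rw [Complex.exp_eq_exp_ℂ]; exact (algebraMap_exp_comm (t * μ)).symm
  rw [hsplit, Matrix.exp_add_of_commute _ _ hcomm, hscalar, ← mulVec_mulVec,
    exp_smul_mulVec_eq_sum_of_pow_mulVec_eq_zero hv, Algebra.algebraMap_eq_smul_one,
    smul_mulVec, one_mulVec, Finset.smul_sum]
  simp_rw [smul_smul, mul_div_assoc]

theorem Matrix.tendsto_exp_smul_mulVec_atTop {M : Matrix ι ι ℂ}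
    (hM : ∀ μ ∈ M.charpoly.roots, μ.re < 0) (v : ι → ℂ) :
    Tendsto (fun t : ℝ => exp ((t : ℂ) • M) *ᵥ v) atTop (𝓝 0) := by
  have hv : v ∈ ⨆ μ, End.maxGenEigenspace (toLin' M) μ := by
    rw [End.iSup_maxGenEigenspace_eq_top]; trivial
  induction hv using Submodule.iSup_induction' with
  | mem μ u hu =>
    obtain rfl | hu0 := eq_or_ne u 0
    · simp
    have hμ : μ.re < 0 := hM μ <| (Polynomial.mem_roots M.charpoly_monic.ne_zero).2 <|
      isRoot_charpoly_of_mem_maxGenEigenspace hu hu0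
    obtain ⟨k, hk⟩ := exists_pow_sub_smul_one_mulVec_eq_zero hu
    simp_rw [exp_smul_mulVec_eq_sum_of_genEigenvector hk]
    rw [← Finset.sum_const_zero (s := Finset.range k)]
    refine tendsto_finsetSum _ fun j _ => ?_
    simpa using ((Complex.tendsto_exp_mul_mul_pow_atTop hμ j).div_const (j ! : ℂ)).smul_const
      ((M - μ • 1) ^ j *ᵥ u)
  | zero => simp
  | add u w _ _ hu hw => simpa [mulVec_add] using hu.add hw

variable {𝕜 : Type*} [RCLike 𝕜]

theorem Matrix.hasDerivAt_exp_smul_mulVec (M : Matrix ι ι 𝕜) (v : ι → 𝕜) (t : ℝ) :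
    HasDerivAt (fun s : ℝ => exp (s • M) *ᵥ v) (M *ᵥ (exp (t • M) *ᵥ v)) t := by
  rw [mulVec_mulVec]
  exact ((mulVec.addMonoidHomLeft v).toRealLinearMap
    (continuous_id.matrix_mulVec continuous_const)).hasFDerivAt.comp_hasDerivAt t
    (hasDerivAt_exp_smul_const' M t)

theorem Matrix.eq_exp_smul_mulVec_of_hasDerivAt {M : Matrix ι ι 𝕜} {y : ℝ → ι → 𝕜}
    (hy : ∀ t, HasDerivAt y (M *ᵥ y t) t) : y = fun t => exp (t • M) *ᵥ y 0 := by
  have hlip := (mulVecLin M).toContinuousLinearMap.lipschitz.lipschitzOnWith (s := Set.univ)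
  refine ODE_solution_unique_univ (v := fun _ => M.mulVec) (s := fun _ => Set.univ) (t₀ := 0)
    (fun _ => hlip) (fun t => ⟨hy t, trivial⟩)
    (fun t => ⟨hasDerivAt_exp_smul_mulVec M (y 0) t, trivial⟩) ?_
  simp

end LinftyOp

theorem Matrix.tendsto_atTop_zero_of_hasDerivAt_mulVec {M : Matrix ι ι ℝ}
    (hM : ∀ μ ∈ (M.charpoly.map (algebraMap ℝ ℂ)).roots, μ.re < 0) {y : ℝ → ι → ℝ}
    (hy : ∀ t, HasDerivAt y (M *ᵥ y t) t) : Tendsto y atTop (𝓝 0) := by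
  set z : ℝ → ι → ℂ := fun t i => y t i
  have hz : ∀ t, HasDerivAt z (M.map (algebraMap ℝ ℂ) *ᵥ z t) t := fun t =>
    hasDerivAt_pi.2 fun i => ((hasDerivAt_pi.1 (hy t)) i).ofReal_comp.congr_deriv
      (RingHom.map_mulVec (algebraMap ℝ ℂ) M (y t) i)
  have hz_lim : Tendsto z atTop (𝓝 0) := by
    rw [eq_exp_smul_mulVec_of_hasDerivAt hz]
    simpa [Complex.coe_smul] using
      tendsto_exp_smul_mulVec_atTop (M := M.map (algebraMap ℝ ℂ)) (by rwa [charpoly_map]) (z 0)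
  have hre := (continuous_pi fun i => Complex.continuous_re.comp (continuous_apply i)).tendsto 0
    |>.comp hz_lim
  simp only [Function.comp_def, z, Complex.ofReal_re] at hre
  exact hre

open Filter in
theorem stmt_14 (n p m : ℕ)
    (A : Matrix (Fin n) (Fin n) ℝ) (B : Matrix (Fin n) (Fin p) ℝ)
    (C : Matrix (Fin p) (Fin n) ℝ) (S : Matrix (Fin m) (Fin m) ℝ)
    (H : Matrix (Fin p) (Fin m) ℝ)
    (Pi : Matrix (Fin n) (Fin m) ℝ) (Γ : Matrix (Fin p) (Fin m) ℝ)
    (F : Matrix (Fin p) (Fin n) ℝ)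
    (hreg1 : Pi * S = A * Pi + B * Γ)
    (hreg2 : C * Pi + H = 0)
    (hHurwitz : ∀ μ : ℂ,
      μ ∈ ((A + B * F).charpoly.map (algebraMap ℝ ℂ)).roots → μ.re < 0)
    (G : Matrix (Fin p) (Fin m) ℝ) (hG : G = Γ - F * Pi)
    (x : ℝ → Fin n → ℝ) (w : ℝ → Fin m → ℝ)
    (hx : ∀ t : ℝ, HasDerivAt x
      ((A + B * F).mulVec (x t) + (B * G).mulVec (w t)) t)
    (hw : ∀ t : ℝ, HasDerivAt w (S.mulVec (w t)) t) :
    (∀ t : ℝ, HasDerivAt (fun s => x s - Pi.mulVec (w s))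
        ((A + B * F).mulVec (x t - Pi.mulVec (w t))) t) ∧
      (∀ t : ℝ, C.mulVec (x t) + H.mulVec (w t) =
        C.mulVec (x t - Pi.mulVec (w t))) ∧
      Tendsto (fun t : ℝ => C.mulVec (x t) + H.mulVec (w t)) atTop (nhds 0) := by
  have hclosed : Pi * S = (A + B * F) * Pi + B * G := by
    rw [hreg1, hG, Matrix.add_mul, Matrix.mul_sub, Matrix.mul_assoc]
    abel
  have hx_tilde : ∀ t, HasDerivAt (fun s => x s - Pi *ᵥ w s) ((A + B * F) *ᵥ (x t - Pi *ᵥ w t)) t :=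
    fun t => hasDerivAt_sub_mulVec_of_mul_eq_mul_add hclosed (hx t) (hw t)
  have he : ∀ t, C *ᵥ x t + H *ᵥ w t = C *ᵥ (x t - Pi *ᵥ w t) := fun t => by
    rw [mulVec_sub, mulVec_mulVec, eq_neg_of_add_eq_zero_left hreg2, neg_mulVec, sub_neg_eq_add]
  refine ⟨hx_tilde, he, ?_⟩
  simp_rw [he]
  simpa [Function.comp_def] using ((mulVecLin C).toContinuousLinearMap.continuous.tendsto 0).comp
    (tendsto_atTop_zero_of_hasDerivAt_mulVec hHurwitz hx_tilde)
end

section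
/- Let λ < 0 and consider y(t) = α₁ e^{λ₁ t} + ... + αₙ e^{λₙ t} with λ₁ < ... < λₙ < 0. If y(t₀) = 0 for some t₀ ≥ 0 and y is not identically zero, then the dominance condition |αₙ| > Σ_{k: αₖαₙ<0} |αₖ| together with αₙ ≠ 0 fails; i.e., the condition of Lemma NOS is violated (contrapositive form of the nonovershooting lemma). -/
/-!
Multiply `y(t)` by `αₙ`. For `t ≥ 0` monotonicity of the exponents gives `e^{λᵢ t} ≤ e^{λₙ t}`,
so the terms `αₙ αᵢ e^{λᵢ t}` with `αᵢ` of the sign of `αₙ` are `≥ 0`, those of opposite sign are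
`≥ -|αₙ| |αᵢ| e^{λₙ t}`, and the leading one is `|αₙ|² e^{λₙ t}`. Hence
`αₙ y(t) ≥ |αₙ| (|αₙ| - Σ_{αₖαₙ<0} |αₖ|) e^{λₙ t} > 0` under the dominance condition.
-/

open Finset

lemma neg_abs_mul_le_mul_mul_of_le {a b w W : ℝ} (hw : 0 ≤ w) (hwW : w ≤ W) :
    -((if a * b < 0 then |a| else 0) * |b| * W) ≤ b * (a * w) := by
  split_ifs with hab
  · have habs : |a| * |b| = -(a * b) := by rw [← abs_mul, abs_of_neg hab]
    nlinarith
  · have : 0 ≤ a * b := not_lt.mp hab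
    have : 0 ≤ a * b * w := mul_nonneg this hw
    linarith

theorem sum_mul_ne_zero_of_dominant {ι : Type*} [Fintype ι] [DecidableEq ι]
    (α w : ι → ℝ) (N : ι) (hw : ∀ i, 0 ≤ w i) (hwN : ∀ i, w i ≤ w N) (hN : 0 < w N)
    (hαN : α N ≠ 0)
    (hdom : ∑ k ∈ univ.filter (fun k => k ≠ N ∧ α k * α N < 0), |α k| < |α N|) :
    ∑ i, α i * w i ≠ 0 := by
  set S := ∑ k ∈ univ.filter (fun k => k ≠ N ∧ α k * α N < 0), |α k|
  have hS : S = ∑ k ∈ univ.erase N, if α k * α N < 0 then |α k| else 0 := by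
    rw [← sum_filter, ← filter_ne', filter_filter]
  have hrest : -(S * |α N| * w N) ≤ ∑ i ∈ univ.erase N, α N * (α i * w i) := by
    rw [hS, sum_mul, sum_mul, ← sum_neg_distrib]
    exact sum_le_sum fun i _ => neg_abs_mul_le_mul_mul_of_le (hw i) (hwN i)
  have hlead : α N * (α N * w N) = |α N| * |α N| * w N := by
    rw [← mul_assoc, ← abs_mul_abs_self (α N)]
  have hpos : 0 < |α N| * (|α N| - S) * w N :=
    mul_pos (mul_pos (abs_pos.mpr hαN) (sub_pos.mpr hdom)) hN
  intro hzero
  have hprod : α N * (α N * w N) + ∑ i ∈ univ.erase N, α N * (α i * w i) = 0 := by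
    rw [← mul_sum, ← mul_add, add_sum_erase _ (fun i => α i * w i) (mem_univ N), hzero, mul_zero]
  linarith

open Finset in
theorem stmt_16_general (n : ℕ) (lam α : Fin (n + 1) → ℝ)
    (hmono : StrictMono lam)
    (t₀ : ℝ) (ht₀ : 0 ≤ t₀)
    (hzero : ∑ i, α i * Real.exp (lam i * t₀) = 0) :
    ¬ (α (Fin.last n) ≠ 0 ∧
      (∑ k ∈ univ.filter (fun k : Fin (n + 1) =>
        k ≠ Fin.last n ∧ α k * α (Fin.last n) < 0), |α k|) < |α (Fin.last n)|) := by
  rintro ⟨hαN, hdom⟩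
  refine sum_mul_ne_zero_of_dominant α (fun i => Real.exp (lam i * t₀)) (Fin.last n)
    (fun i => (Real.exp_pos _).le) (fun i => ?_) (Real.exp_pos _) hαN hdom hzero
  exact Real.exp_le_exp.mpr (mul_le_mul_of_nonneg_right (hmono.monotone (Fin.le_last i)) ht₀)

open Finset in
theorem stmt_16 (n : ℕ) (lam α : Fin (n + 1) → ℝ)
    (hmono : StrictMono lam) (hneg : lam (Fin.last n) < 0)
    (t₀ : ℝ) (ht₀ : 0 ≤ t₀)
    (hzero : ∑ i, α i * Real.exp (lam i * t₀) = 0)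
    (hnontriv : ¬ ∀ t : ℝ, ∑ i, α i * Real.exp (lam i * t) = 0) :
    ¬ (α (Fin.last n) ≠ 0 ∧
      (∑ k ∈ univ.filter (fun k : Fin (n + 1) =>
        k ≠ Fin.last n ∧ α k * α (Fin.last n) < 0), |α k|) < |α (Fin.last n)|) :=
  stmt_16_general n lam α hmono t₀ ht₀ hzero
end

section
/- For the chain-of-integrators system with Moore feedback F = WV⁻¹ built from distinct negative reals λ₁ < ... < λₙ < 0, the output y(t) = C e^{(A+BF)t} x₀ = Σᵢ αᵢ e^{λᵢ t} (α = V⁻¹x₀) satisfies: if αₙ > 0 and all αₖ ≥ 0, then y(t) > 0 for all t ≥ 0 and y is eventually decreasing; in particular y converges to 0 from above without overshoot. -/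
/-!
The Vandermonde matrix `V` diagonalises the closed loop: since `F V = W`, the shift structure of
`A` and `B` gives `(A + B F) V = V diag λ`, so `exp (t (A + B F)) = V diag (e^{λⱼ t}) V⁻¹`. The
first row of `V` consists of ones, hence `y t = ∑ⱼ αⱼ e^{λⱼ t}`. With `αⱼ ≥ 0`, `αₙ > 0` and all
`λⱼ < 0`, this sum is positive, strictly decreasing on the whole line and tends to `0`.
-/

open Filter Matrix Topology

section ChainOfIntegrators

def chainIntegratorA (R : Type*) [CommRing R] (n : ℕ) : Matrix (Fin (n + 1)) (Fin (n + 1)) R :=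
  of fun i j => if (i : ℕ) + 1 = (j : ℕ) then 1 else 0

def chainIntegratorB (R : Type*) [CommRing R] (n : ℕ) : Matrix (Fin (n + 1)) (Fin 1) R :=
  of fun i _ => if i = Fin.last n then 1 else 0

variable {R : Type*} [CommRing R] {n : ℕ}

theorem chainIntegratorA_mul_add_chainIntegratorB_mul (lam : Fin (n + 1) → R) :
    chainIntegratorA R n * (vandermonde lam)ᵀ +
        chainIntegratorB R n * replicateRow (Fin 1) (fun j => lam j ^ (n + 1)) =
      (vandermonde lam)ᵀ * diagonal lam := by
  ext i j
  rw [Matrix.add_apply, Matrix.mul_diagonal]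
  simp only [Matrix.mul_apply, chainIntegratorA, chainIntegratorB, of_apply, transpose_apply,
    vandermonde_apply, replicateRow_apply, ite_mul, one_mul, zero_mul, Finset.univ_unique,
    Finset.sum_singleton]
  rcases Fin.eq_castSucc_or_eq_last i with ⟨i, rfl⟩ | rfl
  · have hsucc : ∀ k : Fin (n + 1), ((i : ℕ) + 1 = k ↔ i.succ = k) := fun k => by
      simp [Fin.ext_iff]
    simp [hsucc, pow_succ]
  · have hlast : ∀ k : Fin (n + 1), (n + 1 ≠ (k : ℕ)) := fun k => by omega
    simp [hlast, pow_succ]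

theorem vandermonde_transpose_mulVec_zero (lam v : Fin (n + 1) → R) :
    ((vandermonde lam)ᵀ *ᵥ v) 0 = ∑ j, v j := by
  simp [mulVec, dotProduct]

end ChainOfIntegrators

theorem Matrix.exp_smul_eq_of_mul_eq_mul_diagonal {ι : Type*} [Fintype ι] [DecidableEq ι]
    {M V : Matrix ι ι ℝ} {d : ι → ℝ} (hV : IsUnit V) (h : M * V = V * diagonal d) (t : ℝ) :
    NormedSpace.exp (t • M) = V * diagonal (fun j => Real.exp (t * d j)) * V⁻¹ := by
  have hM : M = V * diagonal d * V⁻¹ := by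
    rw [← h, mul_nonsing_inv_cancel_right _ _ ((isUnit_iff_isUnit_det V).1 hV)]
  rw [hM, ← smul_mul_assoc, ← mul_smul_comm, ← diagonal_smul, exp_conj _ _ hV, exp_diagonal,
    Pi.exp_def, Real.exp_eq_exp_ℝ]
  rfl

section ExpSum

variable {ι : Type*} [Fintype ι] {α lam : ι → ℝ}

noncomputable def expSum (α lam : ι → ℝ) (t : ℝ) : ℝ :=
  ∑ j, α j * Real.exp (t * lam j)

theorem expSum_pos (hα : ∀ j, 0 ≤ α j) {i : ι} (hi : 0 < α i) (t : ℝ) : 0 < expSum α lam t :=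
  Finset.sum_pos' (fun j _ => mul_nonneg (hα j) (Real.exp_pos _).le)
    ⟨i, Finset.mem_univ _, mul_pos hi (Real.exp_pos _)⟩

theorem expSum_strictAnti (hα : ∀ j, 0 ≤ α j) (hlam : ∀ j, lam j ≤ 0) {i : ι} (hi : 0 < α i)
    (hlami : lam i < 0) : StrictAnti (expSum α lam) := by
  intro s t hst
  apply Finset.sum_lt_sum
  · intro j _
    exact mul_le_mul_of_nonneg_left
      (Real.exp_le_exp.2 (mul_le_mul_of_nonpos_right hst.le (hlam j))) (hα j)
  · exact ⟨i, Finset.mem_univ _,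
      mul_lt_mul_of_pos_left (Real.exp_lt_exp.2 (mul_lt_mul_of_neg_right hst hlami)) hi⟩

theorem tendsto_expSum_atTop (hlam : ∀ j, lam j < 0) :
    Tendsto (expSum α lam) atTop (𝓝 0) := by
  have h : ∀ j, Tendsto (fun t => α j * Real.exp (t * lam j)) atTop (𝓝 0) := fun j => by
    simpa using (Real.tendsto_exp_atBot.comp
      (tendsto_id.atTop_mul_const_of_neg (hlam j))).const_mul (α j)
  have hsum := tendsto_finsetSum Finset.univ fun j _ => h j
  rw [Finset.sum_const_zero] at hsum
  exact hsum

end ExpSum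

open Filter in
theorem stmt_17 (n : ℕ) (lam : Fin (n + 1) → ℝ)
    (hmono : StrictMono lam) (hneg : lam (Fin.last n) < 0)
    (x₀ : Fin (n + 1) → ℝ) :
    let A : Matrix (Fin (n + 1)) (Fin (n + 1)) ℝ :=
      Matrix.of fun i j => if (i : ℕ) + 1 = (j : ℕ) then 1 else 0
    let B : Matrix (Fin (n + 1)) (Fin 1) ℝ :=
      Matrix.of fun i _ => if i = Fin.last n then 1 else 0
    let C : Fin (n + 1) → ℝ := fun j => if j = 0 then 1 else 0
    let V : Matrix (Fin (n + 1)) (Fin (n + 1)) ℝ :=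
      Matrix.of fun i j => lam j ^ (i : ℕ)
    let W : Matrix (Fin 1) (Fin (n + 1)) ℝ :=
      Matrix.of fun _ j => lam j ^ (n + 1)
    let F : Matrix (Fin 1) (Fin (n + 1)) ℝ := W * V⁻¹
    let α : Fin (n + 1) → ℝ := V⁻¹.mulVec x₀
    let y : ℝ → ℝ := fun t =>
      ∑ j, C j * (NormedSpace.exp (t • (A + B * F))).mulVec x₀ j
    0 < α (Fin.last n) → (∀ k, 0 ≤ α k) →
      (∀ t : ℝ, 0 ≤ t → 0 < y t) ∧
      (∃ T : ℝ, 0 ≤ T ∧ StrictAntiOn y (Set.Ici T)) ∧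
      Tendsto y atTop (nhds 0) := by
  intro A B C V W F α y hpos hnonneg
  have hlam : ∀ j, lam j < 0 := fun j => (hmono.monotone (Fin.le_last j)).trans_lt hneg
  have hVdet : IsUnit V.det := by
    rw [show V = (vandermonde lam)ᵀ from rfl, det_transpose]
    exact (det_vandermonde_ne_zero_iff.2 hmono.injective).isUnit
  have hAV : (A + B * F) * V = V * diagonal lam := by
    have hFV : F * V = W := nonsing_inv_mul_cancel_right V W hVdet
    rw [Matrix.add_mul, Matrix.mul_assoc, hFV]
    exact chainIntegratorA_mul_add_chainIntegratorB_mul lam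
  have hy : y = expSum α lam := funext fun t => by
    simp only [y, C, ite_mul, one_mul, zero_mul, Finset.sum_ite_eq', Finset.mem_univ, if_true]
    rw [exp_smul_eq_of_mul_eq_mul_diagonal ((isUnit_iff_isUnit_det V).2 hVdet) hAV t,
      Matrix.mul_assoc, ← mulVec_mulVec, ← mulVec_mulVec]
    refine (vandermonde_transpose_mulVec_zero lam _).trans (Finset.sum_congr rfl fun j _ => ?_)
    rw [mulVec_diagonal, mul_comm]
  rw [hy]
  exact ⟨fun t _ => expSum_pos hnonneg hpos t,
    ⟨0, le_rfl, (expSum_strictAnti hnonneg (fun j => (hlam j).le) hpos (hlam _)).strictAntiOn _⟩,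
    tendsto_expSum_atTop hlam⟩
end
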